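/- For every real $\nu > -1/2$ and every $x > 0$, the Bessel function of the first kind satisfies $|J_\nu(x)| \le \frac{2^{-\nu} x^\nu}{\Gamma(\nu+1)}$. -/

import Mathlib

open Real
open MeasureTheory Set

lemma gamma_nat_add_half (m : ℕ) :
    Real.Gamma (m + 1/2) = (2*m).factorial * Real.sqrt π / (4^m * m.factorial) := by
  induction m with
  | zero => norm_num [Real.Gamma_one_half_eq]
  | succ n ih =>
    have h : ((n:ℝ)+1) + 1/2 = ((n:ℝ) + 1/2) + 1 := by ring
    push_cast
    rw [h, Real.Gamma_add_one (by positivity), ih]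
    have h4 : (4:ℝ)^(n+1) = 4 * 4^n := by ring
    push_cast [Nat.factorial_succ, Nat.mul_succ, Nat.factorial_succ]
    field_simp
    ring

lemma beta_integrable {a b : ℝ} (ha : 0 < a) (hb : 0 < b) :
    IntervalIntegrable (fun s : ℝ => s ^ (a-1) * (1-s) ^ (b-1)) volume 0 1 := by
  have h1 : IntervalIntegrable (fun s : ℝ => s ^ (a-1) * (1-s) ^ (b-1)) volume 0 (1/2) := by
    apply IntervalIntegrable.mul_continuousOn
    · exact intervalIntegral.intervalIntegrable_rpow' (by linarith)
    · apply ContinuousOn.rpow_const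
      · exact (continuous_const.sub continuous_id).continuousOn
      · intro x hx
        rw [Set.uIcc_of_le (by norm_num : (0:ℝ) ≤ 1/2)] at hx
        obtain ⟨h1,h2⟩ := hx; exact Or.inl (by intro h; linarith)
  have h2 : IntervalIntegrable (fun s : ℝ => s ^ (a-1) * (1-s) ^ (b-1)) volume (1/2) 1 := by
    apply IntervalIntegrable.continuousOn_mul
    · have : IntervalIntegrable (fun s : ℝ => s ^ (b-1)) volume 0 (1/2) :=
        intervalIntegral.intervalIntegrable_rpow' (by linarith)
      have := (this.comp_sub_left 1).symm
      norm_num at this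
      exact this
    · apply ContinuousOn.rpow_const continuous_id.continuousOn
      intro x hx
      rw [Set.uIcc_of_le (by norm_num : (1:ℝ)/2 ≤ 1)] at hx
      obtain ⟨h1,h2⟩ := hx; exact Or.inl (by simp only [id]; positivity)
  exact h1.trans h2

lemma betaR {a b : ℝ} (ha : 0 < a) (hb : 0 < b) :
    Real.Gamma a * Real.Gamma b
      = Real.Gamma (a+b) * ∫ s in (0:ℝ)..1, s ^ (a-1) * (1-s) ^ (b-1) := by
  have h := Complex.Gamma_mul_Gamma_eq_betaIntegral (s := (a:ℂ)) (t := (b:ℂ))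
    (by simpa using ha) (by simpa using hb)
  have hbeta : Complex.betaIntegral a b
      = ((∫ s in (0:ℝ)..1, s ^ (a-1) * (1-s) ^ (b-1)) : ℝ) := by
    rw [Complex.betaIntegral, ← intervalIntegral.integral_ofReal]
    apply intervalIntegral.integral_congr
    intro t ht
    rw [Set.uIcc_of_le (by norm_num : (0:ℝ) ≤ 1)] at ht
    push_cast
    rw [Complex.ofReal_cpow ht.1, Complex.ofReal_cpow (by linarith [ht.2] : (0:ℝ) ≤ 1 - t)]
    push_cast
    ring
  rw [hbeta, ← Complex.ofReal_add, Complex.Gamma_ofReal, Complex.Gamma_ofReal,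
    Complex.Gamma_ofReal, ← Complex.ofReal_mul, ← Complex.ofReal_mul] at h
  exact_mod_cast h

lemma inner_bound (ν x : ℝ) (hν : -1/2 < ν) (hx : 0 < x) :
    |∑' m : ℕ, (-1)^m * ((x/2)^2)^m / (m.factorial * Real.Gamma (ν + m + 1))|
      ≤ 1 / Real.Gamma (ν+1) := by
  have hν2 : (0:ℝ) < ν + 1/2 := by linarith
  have hΓ1 : 0 < Real.Gamma (ν+1) := Real.Gamma_pos_of_pos (by linarith)
  have hΓh : 0 < Real.Gamma (ν+1/2) := Real.Gamma_pos_of_pos hν2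
  have hπ : 0 < Real.sqrt π := Real.sqrt_pos.mpr Real.pi_pos
  have hΓm : ∀ m : ℕ, 0 < Real.Gamma (ν + m + 1) := fun m =>
    Real.Gamma_pos_of_pos (by have h0 : (0:ℝ) ≤ m := Nat.cast_nonneg m; linarith)
  -- the summand functions
  set g : ℕ → ℝ → ℝ := fun m s =>
    ((-1)^m * x^(2*m) / (2*m).factorial) * (s ^ ((m:ℝ) - 1/2) * (1-s) ^ (ν - 1/2)) with hg
  -- integrability of the beta-type integrands
  have hIm : ∀ m : ℕ, IntegrableOn (fun s : ℝ => s ^ ((m:ℝ) - 1/2) * (1-s) ^ (ν - 1/2))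
      (Ioc 0 1) volume := by
    intro m
    have := beta_integrable (a := m + 1/2) (b := ν + 1/2) (by positivity) hν2
    rw [intervalIntegrable_iff_integrableOn_Ioc_of_le (by norm_num)] at this
    have e1 : (m:ℝ) + 1/2 - 1 = (m:ℝ) - 1/2 := by ring
    have e2 : ν + 1/2 - 1 = ν - 1/2 := by ring
    rw [e1, e2] at this
    exact this
  have hIg : ∀ m : ℕ, Integrable (g m) (volume.restrict (Ioc 0 1)) :=
    fun m => ((hIm m).const_mul _)
  -- the beta integral values
  have hBm : ∀ m : ℕ, ∫ s in Ioc (0:ℝ) 1, s ^ ((m:ℝ) - 1/2) * (1-s) ^ (ν - 1/2)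
      = Real.Gamma (m + 1/2) * Real.Gamma (ν + 1/2) / Real.Gamma (ν + m + 1) := by
    intro m
    have h := betaR (a := m + 1/2) (b := ν + 1/2) (by positivity) hν2
    rw [show ((m:ℝ) + 1/2) + (ν + 1/2) = ν + m + 1 by ring] at h
    have e1 : (m:ℝ) + 1/2 - 1 = (m:ℝ) - 1/2 := by ring
    have e2 : ν + 1/2 - 1 = ν - 1/2 := by ring
    rw [e1, e2] at h
    rw [← intervalIntegral.integral_of_le (by norm_num : (0:ℝ) ≤ 1),
      eq_div_iff (hΓm m).ne', h]
    ring
  -- value of the integral of g m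
  have hgval : ∀ m : ℕ, ∫ s in Ioc (0:ℝ) 1, g m s
      = (Real.sqrt π * Real.Gamma (ν + 1/2)) *
        ((-1)^m * ((x/2)^2)^m / (m.factorial * Real.Gamma (ν + m + 1))) := by
    intro m
    rw [hg]
    simp only []
    rw [MeasureTheory.integral_const_mul, hBm m, gamma_nat_add_half m]
    have hxm : ((x/2)^2)^m = x^(2*m) / 4^m := by
      rw [show (x/2)^2 = x^2/4 by ring, div_pow, ← pow_mul]
    have hf1 : ((2*m).factorial : ℝ) ≠ 0 := by exact_mod_cast (2*m).factorial_pos.ne'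
    have hf2 : (m.factorial : ℝ) ≠ 0 := by exact_mod_cast m.factorial_pos.ne'
    have h4 : (4:ℝ)^m ≠ 0 := by positivity
    rw [hxm]
    generalize hA : (((2*m).factorial : ℕ) : ℝ) = F at hf1 ⊢
    generalize hB : ((m.factorial : ℕ) : ℝ) = M at hf2 ⊢
    generalize hC : Real.Gamma (ν + 1/2) = G1
    generalize hD : Real.Gamma (ν + (m:ℝ) + 1) = G2
    generalize hE : Real.sqrt π = P
    generalize hX : x^(2*m) = X
    generalize hQ : (4:ℝ)^m = Q at h4 ⊢
    field_simp
  -- summability of the coefficient series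
  have hc : Summable (fun m : ℕ => x^(2*m) / (2*m).factorial) := by
    have h := Real.summable_pow_div_factorial x
    have hinj : Function.Injective (fun m : ℕ => 2*m) := fun a b hab => by
      simp only [] at hab; omega
    exact h.comp_injective hinj
  -- the bounding function
  set bfun : ℝ → ℝ := fun s => s ^ (-(1/2) : ℝ) * (1-s) ^ (ν - 1/2) with hbfun
  have hIb : IntegrableOn bfun (Ioc 0 1) volume := by
    have := beta_integrable (a := 1/2) (b := ν + 1/2) (by norm_num) hν2
    rw [intervalIntegrable_iff_integrableOn_Ioc_of_le (by norm_num)] at this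
    have e1 : (1:ℝ)/2 - 1 = -(1/2) := by norm_num
    have e2 : ν + 1/2 - 1 = ν - 1/2 := by ring
    rw [e1, e2] at this
    exact this
  have hB' : ∫ s in Ioc (0:ℝ) 1, bfun s
      = Real.sqrt π * Real.Gamma (ν + 1/2) / Real.Gamma (ν + 1) := by
    have h := hBm 0
    have e1 : ((0:ℕ):ℝ) - 1/2 = -(1/2) := by norm_num
    rw [e1] at h
    rw [hbfun, h, gamma_nat_add_half 0]
    norm_num
  have hbnonneg : ∀ s ∈ Ioc (0:ℝ) 1, 0 ≤ bfun s := by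
    intro s hs
    exact mul_nonneg (Real.rpow_nonneg hs.1.le _)
      (Real.rpow_nonneg (by linarith [hs.2]) _)
  -- pointwise monotone bound
  have hmono : ∀ m : ℕ, ∀ s ∈ Ioc (0:ℝ) 1,
      s ^ ((m:ℝ) - 1/2) * (1-s) ^ (ν - 1/2) ≤ bfun s := by
    intro m s hs
    apply mul_le_mul_of_nonneg_right
    · exact Real.rpow_le_rpow_of_exponent_ge hs.1 hs.2
        (by have : (0:ℝ) ≤ m := Nat.cast_nonneg m; linarith)
    · have : (0:ℝ) ≤ 1 - s := by linarith [hs.2]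
      positivity
  -- norm integrals
  have hnorm : ∀ m : ℕ, ∫ s in Ioc (0:ℝ) 1, ‖g m s‖
      = (x^(2*m) / (2*m).factorial) *
        ∫ s in Ioc (0:ℝ) 1, s ^ ((m:ℝ) - 1/2) * (1-s) ^ (ν - 1/2) := by
    intro m
    rw [← MeasureTheory.integral_const_mul]
    apply MeasureTheory.setIntegral_congr_fun measurableSet_Ioc
    intro s hs
    have h1 : (0:ℝ) ≤ s ^ ((m:ℝ) - 1/2) := Real.rpow_nonneg hs.1.le _
    have h2 : (0:ℝ) ≤ (1-s) ^ (ν - 1/2) := Real.rpow_nonneg (by linarith [hs.2]) _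
    have hf1 : (0:ℝ) < (2*m).factorial := by exact_mod_cast (2*m).factorial_pos
    rw [hg]
    simp only [Real.norm_eq_abs, abs_mul, abs_div, abs_pow, abs_neg, abs_one, one_pow,
      abs_of_pos hx, abs_of_pos hf1, abs_of_nonneg h1, abs_of_nonneg h2]
    ring
  have hBmono : ∀ m : ℕ, ∫ s in Ioc (0:ℝ) 1, s ^ ((m:ℝ) - 1/2) * (1-s) ^ (ν - 1/2)
      ≤ ∫ s in Ioc (0:ℝ) 1, bfun s :=
    fun m => MeasureTheory.setIntegral_mono_on (hIm m) hIb measurableSet_Ioc (hmono m)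
  have hBnonneg : (0:ℝ) ≤ ∫ s in Ioc (0:ℝ) 1, bfun s :=
    MeasureTheory.setIntegral_nonneg measurableSet_Ioc hbnonneg
  have hsum : Summable (fun m : ℕ => ∫ s in Ioc (0:ℝ) 1, ‖g m s‖) := by
    apply Summable.of_nonneg_of_le
      (fun m => MeasureTheory.integral_nonneg fun s => norm_nonneg _)
      (fun m => ?_) (hc.mul_right (∫ s in Ioc (0:ℝ) 1, bfun s))
    rw [hnorm m]
    exact mul_le_mul_of_nonneg_left (hBmono m) (by positivity)
  -- swap sum and integral
  have hswap := MeasureTheory.integral_tsum_of_summable_integral_norm hIg hsum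
  -- identify the pointwise sum with the cosine
  have hptsum : ∀ s ∈ Ioc (0:ℝ) 1,
      ∑' m : ℕ, g m s = Real.cos (x * Real.sqrt s) * bfun s := by
    intro s hs
    have hs0 : (0:ℝ) < s := hs.1
    have hsq : ∀ m : ℕ, (x * Real.sqrt s)^(2*m) = x^(2*m) * s^m := by
      intro m
      rw [mul_pow, pow_mul (Real.sqrt s), Real.sq_sqrt hs0.le]
    have hgs : ∀ m : ℕ, g m s
        = ((-1)^m * (x * Real.sqrt s)^(2*m) / (2*m).factorial) * bfun s := by
      intro m
      rw [hg, hbfun]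
      simp only [hsq m]
      have : s ^ ((m:ℝ) - 1/2) = s^m * s ^ (-(1/2) : ℝ) := by
        rw [sub_eq_add_neg, Real.rpow_add hs0, Real.rpow_natCast]
      rw [this]
      ring
    rw [tsum_congr hgs, tsum_mul_right, Real.cos_eq_tsum]
  have hIeq : ∫ s in Ioc (0:ℝ) 1, ∑' m : ℕ, g m s
      = ∫ s in Ioc (0:ℝ) 1, Real.cos (x * Real.sqrt s) * bfun s :=
    MeasureTheory.setIntegral_congr_fun measurableSet_Ioc hptsum
  -- put it together
  set S := ∑' m : ℕ, (-1)^m * ((x/2)^2)^m / (m.factorial * Real.Gamma (ν + m + 1)) with hS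
  have hkey : Real.sqrt π * Real.Gamma (ν + 1/2) * S
      = ∫ s in Ioc (0:ℝ) 1, Real.cos (x * Real.sqrt s) * bfun s := by
    rw [← hIeq, ← hswap, tsum_congr hgval, tsum_mul_left]
  have hbound : |∫ s in Ioc (0:ℝ) 1, Real.cos (x * Real.sqrt s) * bfun s|
      ≤ ∫ s in Ioc (0:ℝ) 1, bfun s := by
    rw [← Real.norm_eq_abs]
    refine (MeasureTheory.norm_integral_le_integral_norm _).trans ?_
    apply MeasureTheory.integral_mono_of_nonneg
      (Filter.Eventually.of_forall fun s => norm_nonneg _) hIb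
    filter_upwards [MeasureTheory.ae_restrict_mem measurableSet_Ioc] with s hs
    rw [Real.norm_eq_abs, abs_mul, abs_of_nonneg (hbnonneg s hs)]
    exact mul_le_of_le_one_left (hbnonneg s hs) (Real.abs_cos_le_one _)
  rw [← hkey, hB', abs_mul, abs_of_pos (by positivity : (0:ℝ) < Real.sqrt π * Real.Gamma (ν + 1/2))] at hbound
  have hpos : (0:ℝ) < Real.sqrt π * Real.Gamma (ν + 1/2) := by positivity
  have hle : |S| ≤ (Real.sqrt π * Real.Gamma (ν + 1/2) / Real.Gamma (ν+1))
      / (Real.sqrt π * Real.Gamma (ν + 1/2)) := (le_div_iff₀' hpos).mpr hbound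
  have heq : (Real.sqrt π * Real.Gamma (ν + 1/2) / Real.Gamma (ν+1))
      / (Real.sqrt π * Real.Gamma (ν + 1/2)) = 1 / Real.Gamma (ν+1) := by
    rw [div_div, mul_comm (Real.Gamma (ν+1)), ← div_div, div_self hpos.ne']
  exact hle.trans_eq heq


/-- The Bessel function of the first kind of (real) order `ν`, for `x > 0`,
defined by its power series. -/
noncomputable def besselJ (ν x : ℝ) : ℝ :=
  ∑' m : ℕ, (-1) ^ m * (x / 2) ^ (ν + 2 * m) / (m.factorial * Real.Gamma (ν + m + 1))

theorem besselJ_bound (ν x : ℝ) (hν : -1/2 < ν) (hx : 0 < x) :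
    |besselJ ν x| ≤ 2 ^ (-ν) * x ^ ν / Real.Gamma (ν + 1) := by
  have h2 : (0:ℝ) < x / 2 := by linarith
  have hΓ1 : 0 < Real.Gamma (ν+1) := Real.Gamma_pos_of_pos (by linarith)
  have hstep : besselJ ν x = (x/2) ^ ν *
      ∑' m : ℕ, (-1)^m * ((x/2)^2)^m / (m.factorial * Real.Gamma (ν + m + 1)) := by
    rw [besselJ, ← tsum_mul_left]
    apply tsum_congr
    intro m
    rw [show ν + 2*(m:ℝ) = ν + ((2*m : ℕ) : ℝ) by push_cast; ring,
      Real.rpow_add h2, Real.rpow_natCast, pow_mul]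
    ring
  have hr : (2:ℝ)^(-ν) * x^ν = (x/2)^ν := by
    rw [Real.div_rpow hx.le (by norm_num : (0:ℝ) ≤ 2),
      Real.rpow_neg (by norm_num : (0:ℝ) ≤ 2)]
    ring
  calc |besselJ ν x|
      = (x/2)^ν * |∑' m : ℕ, (-1)^m * ((x/2)^2)^m / (m.factorial * Real.Gamma (ν + m + 1))| := by
        rw [hstep, abs_mul, abs_of_nonneg (Real.rpow_nonneg h2.le ν)]
    _ ≤ (x/2)^ν * (1 / Real.Gamma (ν+1)) :=
        mul_le_mul_of_nonneg_left (inner_bound ν x hν hx) (Real.rpow_nonneg h2.le ν)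
    _ = 2 ^ (-ν) * x ^ ν / Real.Gamma (ν + 1) := by rw [← hr]; ring
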